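/- arXiv:1106.2583 — 2 statements merged into one kernel-verified Lean document; each statement's English description precedes it below -/
import Mathlib

section
/- Fix n ≥ 2 and a positive integer N. The map sending γ ∈ GL(n, ℤ) to its last column induces a bijection between the cosets γ(Γ̃ ∩ P̃)\ for γ ∈ Γ̃ (i.e. the quotient Γ̃/(Γ̃ ∩ P̃)) and the set of primitive integer vectors v = (v_1, …, v_n) ∈ ℤ^n (gcd(v_1,…,v_n) = 1) satisfying N | v_1, …, N | v_{n-1}, taken modulo ±1; here Γ̃ = Γ̃_0(N) = {γ ∈ GL(n,ℤ) : γ_{i1} ≡ 0 mod N for i ≥ 2} and P̃ is the subgroup of GL(n,ℤ) of matrices whose last column is (0,…,0,±1)ᵗ. -/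
open Matrix

/-!
Both halves rest on the identity `(γ * p).col b = γ *ᵥ p.col b`. Since `γ` acts injectively,
`γ * p` and `γ` have the same last column up to sign exactly when `p.col b = ±e_b`, and
`Γ̃₀(N)`, the preimage of the stabilizer of the line through `e_a` under reduction mod `N`, is a
group, so `γ⁻¹ * γ'` lies in it.

For existence, complete the primitive vector `v` to some `A ∈ GL(n, ℤ)` and look for `p` with
`p.col b = e_b`, so that `A * p` still has last column `v`. We need
`(A * p).col a ≡ λ e_a (mod N)`, i.e. `p.col a ≡ λ d` for `d = A⁻¹.col a`. Row `a` of `A A⁻¹ = 1`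
reads `∑_{j ≠ b} A_{aj} d_j + v_a d_b = 1` with `N ∣ v_a`, so `G = gcd_{j ≠ b} d_j` is prime to
`N`. With `λ G ≡ 1 (mod N)` the vector `λ d` is congruent to `d / G` on the coordinates `j ≠ b`,
and `d / G` is primitive there. A vector that is primitive off `b` is column `a` of a block
matrix `[[B, 0], [r, 1]]` whose last column is `e_b`.
-/

namespace Matrix

variable {ι R : Type*} [CommRing R]

theorem col_eq_single_or_neg_iff [DecidableEq ι] (M : Matrix ι ι R) (k : ι) :
    (M.col k = Pi.single k 1 ∨ M.col k = -Pi.single k 1) ↔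
      (∀ i ≠ k, M i k = 0) ∧ (M k k = 1 ∨ M k k = -1) := by
  simp only [funext_iff, col_apply, Pi.neg_apply, Pi.single_apply]
  constructor
  · rintro (h | h)
    · exact ⟨fun i hi => by simpa [hi] using h i, Or.inl (by simpa using h k)⟩
    · exact ⟨fun i hi => by simpa [hi] using h i, Or.inr (by simpa using h k)⟩
  · rintro ⟨h0, h1 | h1⟩
    · left; intro i; split_ifs with hi <;> simp_all
    · right; intro i; split_ifs with hi <;> simp_all

variable [Fintype ι]

theorem mul_apply_eq_mul_of_col_eq_zero {A B : Matrix ι ι R} {k : ι} (hB : ∀ j ≠ k, B j k = 0)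
    (i : ι) : (A * B) i k = A i k * B k k := by
  rw [mul_apply]
  exact Finset.sum_eq_single k (fun j _ hj => by rw [hB j hj, mul_zero]) (by simp)

variable [DecidableEq ι]

theorem col_mul (A B : Matrix ι ι R) (k : ι) : (A * B).col k = A *ᵥ B.col k := by
  rw [← mulVec_single_one, ← mulVec_single_one, mulVec_mulVec]

theorem col_one (k : ι) : (1 : Matrix ι ι R).col k = Pi.single k 1 := by
  rw [← mulVec_single_one, one_mulVec]

namespace GeneralLinearGroup

theorem mulVec_injective (g : GL ι R) : Function.Injective ((g : Matrix ι ι R) *ᵥ ·) :=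
  fun x y h => by
    simpa [mulVec_mulVec, ← coe_mul] using congrArg (((g⁻¹ : GL ι R) : Matrix ι ι R) *ᵥ ·) h

theorem col_mul_eq_smul_col_iff (g p : GL ι R) (k : ι) (c : R) :
    (g * p : Matrix ι ι R).col k = c • (g : Matrix ι ι R).col k ↔
      (p : Matrix ι ι R).col k = c • Pi.single k 1 := by
  rw [col_mul, ← mulVec_single_one (g : Matrix ι ι R), ← mulVec_smul]
  exact (mulVec_injective g).eq_iff

theorem exists_mul_mem_iff_col_eq_or_neg (H : Subgroup (GL ι R)) {g g' : GL ι R} (hg : g ∈ H)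
    (hg' : g' ∈ H) (k : ι) :
    (∃ p ∈ H, ((p : Matrix ι ι R).col k = Pi.single k 1 ∨
        (p : Matrix ι ι R).col k = -Pi.single k 1) ∧ g' = g * p) ↔
      ((g' : Matrix ι ι R).col k = (g : Matrix ι ι R).col k ∨
        (g' : Matrix ι ι R).col k = -(g : Matrix ι ι R).col k) := by
  have key (p : GL ι R) : ((g * p : Matrix ι ι R).col k = (g : Matrix ι ι R).col k ∨
      (g * p : Matrix ι ι R).col k = -(g : Matrix ι ι R).col k) ↔
      ((p : Matrix ι ι R).col k = Pi.single k 1 ∨ (p : Matrix ι ι R).col k = -Pi.single k 1) := by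
    simpa only [one_smul, neg_one_smul] using
      or_congr (col_mul_eq_smul_col_iff g p k 1) (col_mul_eq_smul_col_iff g p k (-1))
  constructor
  · rintro ⟨p, -, hp, rfl⟩
    exact (key p).mpr hp
  · intro h
    refine ⟨g⁻¹ * g', H.mul_mem (H.inv_mem hg) hg', (key _).mp ?_, (mul_inv_cancel_left g g').symm⟩
    rwa [← coe_mul, mul_inv_cancel_left]

variable (R) in
def lineStabilizer (k : ι) : Subgroup (GL ι R) where
  carrier := {g | ∀ i ≠ k, (g : Matrix ι ι R) i k = 0}
  mul_mem' {g h} hg hh i hi := by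
    rw [coe_mul, mul_apply_eq_mul_of_col_eq_zero hh, hg i hi, zero_mul]
  one_mem' i hi := one_apply_ne hi
  inv_mem' {g} hg i hi := by
    have hinv (i : ι) : ((g⁻¹ : GL ι R) : Matrix ι ι R) i k * (g : Matrix ι ι R) k k =
        (1 : Matrix ι ι R) i k := by
      rw [← mul_apply_eq_mul_of_col_eq_zero hg, ← coe_mul, inv_mul_cancel, coe_one]
    have hunit : IsUnit ((g : Matrix ι ι R) k k) :=
      IsUnit.of_mul_eq_one_right _ (by rw [hinv, one_apply_eq])
    rw [← hunit.mul_left_eq_zero, hinv, one_apply_ne hi]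

end GeneralLinearGroup

end Matrix

section PrincipalIdealRing

variable {R : Type*} [CommRing R] [IsDomain R] [IsPrincipalIdealRing R]

theorem Module.Basis.exists_fin_zero_eq_of_apply_eq_one {M : Type*} [AddCommGroup M] [Module R M]
    [Module.Free R M] [Module.Finite R M] (f : M →ₗ[R] R) {v : M} (hv : f v = 1) :
    ∃ (r : ℕ) (b : Module.Basis (Fin (r + 1)) R M), b 0 = v := by
  have hli (c : R) (x) (hx : x ∈ LinearMap.ker f) (hcx : c • v + x = 0) : c = 0 := by
    simpa [hv, LinearMap.mem_ker.mp hx] using congrArg f hcx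
  have hsp (z : M) : ∃ c : R, z + c • v ∈ LinearMap.ker f := ⟨-f z, by simp [hv]⟩
  exact ⟨_, .mkFinCons v (Module.finBasis R (LinearMap.ker f)) hli hsp,
    by rw [Module.Basis.coe_mkFinCons, Fin.cons_zero]⟩

namespace Matrix.GeneralLinearGroup

variable {ι : Type*} [Fintype ι] [DecidableEq ι]

theorem exists_col_eq {v : ι → R} (hv : ∃ c, v ⬝ᵥ c = 1) (j : ι) :
    ∃ g : GL ι R, (g : Matrix ι ι R).col j = v := by
  obtain ⟨c, hc⟩ := hv
  obtain ⟨r, b, hb⟩ := Module.Basis.exists_fin_zero_eq_of_apply_eq_one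
    (Fintype.linearCombination R c) (v := v)
    (by simpa [Fintype.linearCombination_apply, dotProduct, mul_comm] using hc)
  let e := b.indexEquiv (Pi.basisFun R ι)
  let b' := b.reindex (e.trans (Equiv.swap (e 0) j))
  have hb' : b' j = v := by simp [b', hb]
  let _ := (Pi.basisFun R ι).invertibleToMatrix b'
  exact ⟨unitOfInvertible ((Pi.basisFun R ι).toMatrix b'), by
    ext i; simp [Module.Basis.toMatrix_apply, hb']⟩

theorem exists_col_eq_and_col_eq_single {a b : ι} (hab : a ≠ b) {w : ι → R}
    (hw : ∃ c, (fun i : {i // i ≠ b} => w i) ⬝ᵥ c = 1) :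
    ∃ p : GL ι R, (p : Matrix ι ι R).col a = w ∧ (p : Matrix ι ι R).col b = Pi.single b 1 := by
  obtain ⟨B, hB⟩ := exists_col_eq hw ⟨a, hab⟩
  let r : Matrix {i // ¬i ≠ b} {i // i ≠ b} R := of fun _ j => if (j : ι) = a then w b else 0
  let e := Equiv.sumCompl (· ≠ b)
  let M := reindex e e (fromBlocks (B : Matrix {i // i ≠ b} {i // i ≠ b} R) 0 r 1)
  have hM : IsUnit M.det := by
    rw [det_reindex_self, det_fromBlocks_zero₁₂, det_one, mul_one]
    exact isUnits_det_units B
  have he {i : ι} (hi : i ≠ b) : e.symm i = .inl ⟨i, hi⟩ :=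
    Equiv.sumCompl_symm_apply_of_pos (p := (· ≠ b)) hi
  have heb : e.symm b = .inr ⟨b, not_not.mpr rfl⟩ :=
    Equiv.sumCompl_symm_apply_of_neg (p := (· ≠ b)) _
  refine ⟨nonsingInvUnit M hM, funext fun i => ?_, funext fun i => ?_⟩ <;>
    change M i _ = _ <;> simp only [M, reindex_apply, submatrix_apply, he hab, heb] <;>
    by_cases hi : i = b
  · subst hi
    simp [heb, r]
  · simpa [he hi] using congrFun hB ⟨i, hi⟩
  · subst hi
    simp [heb]
  · simp [he hi, hi]

end Matrix.GeneralLinearGroup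

end PrincipalIdealRing

namespace Matrix.GeneralLinearGroup

variable {ι : Type*} [Fintype ι] [DecidableEq ι]

def gammaZero (N : ℕ) (a : ι) : Subgroup (GL ι ℤ) :=
  (lineStabilizer (ZMod N) a).comap (map (Int.castRingHom (ZMod N)))

theorem mem_gammaZero {N : ℕ} {a : ι} {g : GL ι ℤ} :
    g ∈ gammaZero N a ↔ ∀ i ≠ a, (N : ℤ) ∣ (g : Matrix ι ι ℤ) i a := by
  simp [gammaZero, lineStabilizer, ZMod.intCast_zmod_eq_zero_iff_dvd]

theorem exists_mem_gammaZero_col_eq {N : ℕ} {a b : ι} (hab : a ≠ b) {v : ι → ℤ}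
    (hv : ∃ c, v ⬝ᵥ c = 1) (hvN : ∀ i ≠ b, (N : ℤ) ∣ v i) :
    ∃ g ∈ gammaZero N a, (g : Matrix ι ι ℤ).col b = v := by
  obtain ⟨A, hA⟩ := exists_col_eq hv b
  set d := ((A⁻¹ : GL ι ℤ) : Matrix ι ι ℤ).col a
  have hAd : (A : Matrix ι ι ℤ) *ᵥ d = Pi.single a 1 := by
    rw [← col_mul, ← coe_mul, mul_inv_cancel, coe_one, col_one]
  obtain ⟨u, hdu, hu⟩ := Finset.extract_gcd (fun i : {i // i ≠ b} => d i)
    ⟨⟨a, hab⟩, Finset.mem_univ _⟩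
  set G := Finset.univ.gcd (fun i : {i // i ≠ b} => d i)
  have hGN : IsCoprime G N := by
    obtain ⟨t, ht⟩ := hvN a hab
    refine ⟨∑ j : {j // j ≠ b}, (A : Matrix ι ι ℤ) a j * u j, t * d b, ?_⟩
    have := congrFun hAd a
    rw [Pi.single_eq_same, mulVec, dotProduct, Fintype.sum_eq_add_sum_subtype_ne _ b] at this
    rw [← this, show (A : Matrix ι ι ℤ) a b = v a from congrFun hA a, ht, add_comm]
    simp only [hdu _ (Finset.mem_univ _), Finset.sum_mul]
    congr 1
    · ring
    · exact Finset.sum_congr rfl fun j _ => by ring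
  obtain ⟨x, y, hxy⟩ := hGN
  let z : ι → ℤ := fun i => if h : i = b then 0 else y * u ⟨i, h⟩
  let w := x • d + (N : ℤ) • z
  have hwu (i : {i // i ≠ b}) : w i = u i := by
    simp only [w, z, Pi.add_apply, Pi.smul_apply, smul_eq_mul, dif_neg i.2,
      hdu i (Finset.mem_univ _)]
    linear_combination u i * hxy
  obtain ⟨p, hpa, hpb⟩ := exists_col_eq_and_col_eq_single hab (w := w) (by
    obtain ⟨c, hc⟩ := Finset.gcd_eq_sum_mul Finset.univ u
    exact ⟨c, by simp only [dotProduct, hwu, ← hc, hu]⟩)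
  refine ⟨A * p, mem_gammaZero.mpr fun i hi => ?_, ?_⟩
  · have hcol : ((A * p : GL ι ℤ) : Matrix ι ι ℤ).col a =
        x • Pi.single a 1 + (N : ℤ) • ((A : Matrix ι ι ℤ) *ᵥ z) := by
      rw [coe_mul, col_mul, hpa, mulVec_add, mulVec_smul, mulVec_smul, hAd]
    have := congrFun hcol i
    simp only [col_apply, Pi.add_apply, Pi.smul_apply, Pi.single_eq_of_ne hi, smul_eq_mul,
      mul_zero, zero_add] at this
    exact ⟨_, this⟩
  · rw [coe_mul, col_mul, hpb, mulVec_single_one, hA]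

end Matrix.GeneralLinearGroup

/-- The last-column map induces a bijection between the cosets `Γ̃/(Γ̃ ∩ P̃)`, for
`Γ̃ = Γ̃₀(N) = {γ ∈ GL(n,ℤ) : N ∣ γ_{i1} for i ≥ 2}` and `P̃ = {γ ∈ GL(n,ℤ) : last column
(0,…,0,±1)ᵗ}`, and the set of primitive vectors `v ∈ ℤⁿ` with `N ∣ v₁,…,v_{n-1}`, modulo `±1`:
two elements of `Γ̃` lie in the same coset of `Γ̃ ∩ P̃` iff their last columns agree up to sign,
and every primitive vector satisfying the divisibility conditions arises as the last column of
some element of `Γ̃`. -/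
theorem mirabolic_coset_bijection (n N : ℕ) (hn : 2 ≤ n)
    (Γt Pt : Set (GL (Fin n) ℤ))
    (hΓ : Γt = {γ : GL (Fin n) ℤ | ∀ i : Fin n, 1 ≤ (i : ℕ) →
        (N : ℤ) ∣ (γ : Matrix (Fin n) (Fin n) ℤ) i ⟨0, by omega⟩})
    (hP : Pt = {γ : GL (Fin n) ℤ |
        (∀ i : Fin n, (i : ℕ) ≠ n - 1 →
          (γ : Matrix (Fin n) (Fin n) ℤ) i ⟨n - 1, by omega⟩ = 0) ∧
        ((γ : Matrix (Fin n) (Fin n) ℤ) ⟨n - 1, by omega⟩ ⟨n - 1, by omega⟩ = 1 ∨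
         (γ : Matrix (Fin n) (Fin n) ℤ) ⟨n - 1, by omega⟩ ⟨n - 1, by omega⟩ = -1)}) :
    (∀ γ ∈ Γt, ∀ γ' ∈ Γt,
      ((∃ p ∈ Γt ∩ Pt, γ' = γ * p) ↔
        ((fun i => (γ' : Matrix (Fin n) (Fin n) ℤ) i ⟨n - 1, by omega⟩)
            = (fun i => (γ : Matrix (Fin n) (Fin n) ℤ) i ⟨n - 1, by omega⟩) ∨
         (fun i => (γ' : Matrix (Fin n) (Fin n) ℤ) i ⟨n - 1, by omega⟩)
            = (fun i => -(γ : Matrix (Fin n) (Fin n) ℤ) i ⟨n - 1, by omega⟩)))) ∧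
    (∀ v : Fin n → ℤ, Finset.univ.gcd v = 1 →
      (∀ i : Fin n, (i : ℕ) ≠ n - 1 → (N : ℤ) ∣ v i) →
      ∃ γ ∈ Γt, ∀ i, (γ : Matrix (Fin n) (Fin n) ℤ) i ⟨n - 1, by omega⟩ = v i) := by
  set a : Fin n := ⟨0, by omega⟩
  set b : Fin n := ⟨n - 1, by omega⟩
  have hab : a ≠ b := by simp [a, b, Fin.ext_iff]; omega
  have hΓ' : Γt = GeneralLinearGroup.gammaZero N a := by
    ext g
    rw [hΓ, SetLike.mem_coe, GeneralLinearGroup.mem_gammaZero]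
    simp [a, Fin.ext_iff, Nat.one_le_iff_ne_zero]
  have hP' : Pt = {p : GL (Fin n) ℤ | (p : Matrix (Fin n) (Fin n) ℤ).col b = Pi.single b 1 ∨
      (p : Matrix (Fin n) (Fin n) ℤ).col b = -Pi.single b 1} := by
    ext p
    rw [hP, Set.mem_ofPred_eq, Set.mem_ofPred_eq, col_eq_single_or_neg_iff]
    simp [b, Fin.ext_iff]
  subst hΓ' hP'
  refine ⟨fun g hg g' hg' => ?_, fun v hv hvN => ?_⟩
  · simp only [Set.mem_inter_iff, SetLike.mem_coe, Set.mem_ofPred_eq, and_assoc]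
    exact GeneralLinearGroup.exists_mul_mem_iff_col_eq_or_neg _ hg hg' b
  · obtain ⟨c, hc⟩ := Finset.gcd_eq_sum_mul Finset.univ v
    obtain ⟨g, hg, hgv⟩ := GeneralLinearGroup.exists_mem_gammaZero_col_eq hab
      ⟨c, by rw [dotProduct, ← hc, hv]⟩ fun i hi => hvN i (Fin.val_ne_iff.mpr hi)
    exact ⟨g, hg, congrFun hgv⟩
end

section
/- Let n ≥ 2, η_0, …, η_{n-1} ∈ {0,1}, and β_0, …, β_{n-1} ∈ ℂ with Re(β_j) > 0 for all j and Re(β_0 + ⋯ + β_{n-1}) < 1. For t_n ∈ ℝ, t_n ≠ 0, define I(t_n) = ∫_{ℝ^{n-1}} |t_n − Σ_{j=1}^{n-1} t_j|^{β_0−1} sgn(t_n − Σ t_j)^{η_0} Π_{j=1}^{n-1} (|t_j|^{β_j−1} sgn(t_j)^{η_j}) dt_1⋯dt_{n-1}. Then the integral converges absolutely and I(t_n) = |t_n|^{β_0+⋯+β_{n-1}−1} · sgn(t_n)^{η_0+⋯+η_{n-1}} · I(1). -/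
/-!
Substituting `x = t • y` has Jacobian `|t| ^ m`, and since every factor `|u| ^ (β - 1) sgn(u) ^ η`
is multiplicative in `u`, the integrand at `t • y` is the integrand for `t = 1` times
`|t| ^ (β₀ + ∑ β - 1 - m) sgn(t) ^ (η₀ + ∑ η)`.

Absolute convergence: the modulus of the integrand is bounded by a product of Riesz kernels
`|u| ^ (Re β - 1)`, and integrating out one variable at a time uses
`∫ |u - s| ^ (a - 1) |s| ^ (b - 1) ds = C |u| ^ (a + b - 1)` for `u ≠ 0`,
with `C < ∞` when `a, b > 0` and `a + b < 1`.
-/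

open MeasureTheory

/-- The beta-like integral `I(t)` in `m = n-1` variables. -/
noncomputable def betaLikeIntegral (m : ℕ) (β₀ : ℂ) (η₀ : ℕ)
    (β : Fin m → ℂ) (η : Fin m → ℕ) (t : ℝ) : ℂ :=
  ∫ x : Fin m → ℝ,
    ((|t - ∑ j, x j| : ℝ) : ℂ) ^ (β₀ - 1) * ((Real.sign (t - ∑ j, x j) : ℂ)) ^ η₀ *
      ∏ j, (((|x j| : ℝ) : ℂ) ^ (β j - 1) * ((Real.sign (x j) : ℂ)) ^ η j)

namespace BetaLike

open Set Finset ENNReal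

theorem lintegral_eq_ofReal_abs_mul_lintegral_comp_mul_left (g : ℝ → ℝ≥0∞) {u : ℝ}
    (hu : u ≠ 0) : ∫⁻ x, g x = ENNReal.ofReal |u| * ∫⁻ y, g (u * y) := by
  conv_lhs => rw [← Real.smul_map_volume_mul_left hu]
  rw [lintegral_smul_measure, (measurableEmbedding_mulLeft₀ hu).lintegral_map, smul_eq_mul]

theorem integral_eq_abs_pow_finrank_smul_integral_comp_smul {E F : Type*} [NormedAddCommGroup E]
    [NormedSpace ℝ E] [MeasurableSpace E] [BorelSpace E] [FiniteDimensional ℝ E] (μ : Measure E)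
    [μ.IsAddHaarMeasure] [NormedAddCommGroup F] [NormedSpace ℝ F] (f : E → F) {R : ℝ}
    (hR : R ≠ 0) : ∫ x, f x ∂μ = |R| ^ Module.finrank ℝ E • ∫ x, f (R • x) ∂μ := by
  rw [Measure.integral_comp_smul, smul_smul, abs_inv, abs_pow,
    mul_inv_cancel₀ (pow_ne_zero _ (abs_ne_zero.mpr hR)), one_smul]

theorem lintegral_fin_succ {m : ℕ} {g : (Fin (m + 1) → ℝ) → ℝ≥0∞} (hg : Measurable g) :
    ∫⁻ x, g x = ∫⁻ s, ∫⁻ y : Fin m → ℝ, g (Fin.cons s y) := by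
  let e := MeasurableEquiv.piFinSuccAbove (fun _ : Fin (m + 1) => ℝ) 0
  rw [← (volume_preserving_piFinSuccAbove (fun _ => ℝ) 0).symm.lintegral_comp hg,
    Measure.volume_eq_prod, lintegral_prod (fun p => g (e.symm p))
      (hg.comp e.symm.measurable).aemeasurable]
  simp only [e, MeasurableEquiv.piFinSuccAbove_symm_apply, Fin.insertNthEquiv_zero]
  rfl

theorem enorm_prod {ι R : Type*} [SeminormedCommRing R] [NormMulClass R] [NormOneClass R]
    (s : Finset ι) (f : ι → R) : ‖∏ i ∈ s, f i‖ₑ = ∏ i ∈ s, ‖f i‖ₑ := by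
  simp only [enorm_eq_nnnorm, nnnorm_prod, ENNReal.ofNNReal_finsetProd]

@[fun_prop]
theorem measurable_sign : Measurable Real.sign :=
  Measurable.ite measurableSet_Iio measurable_const
    (Measurable.ite measurableSet_Ioi measurable_const measurable_const)

theorem abs_sign_le_one (x : ℝ) : |Real.sign x| ≤ 1 := by
  rcases Real.sign_apply_eq x with h | h | h <;> simp [h]

theorem sign_mul (x y : ℝ) : Real.sign (x * y) = Real.sign x * Real.sign y := by
  rcases lt_trichotomy x 0 with hx | rfl | hx <;>
    rcases lt_trichotomy y 0 with hy | rfl | hy <;>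
    simp [Real.sign_of_neg, Real.sign_of_pos, mul_pos_of_neg_of_neg, mul_neg_of_neg_of_pos,
      mul_neg_of_pos_of_neg, *]

noncomputable def signedCpow (c : ℂ) (k : ℕ) (x : ℝ) : ℂ :=
  ((|x| : ℝ) : ℂ) ^ c * (Real.sign x : ℂ) ^ k

@[fun_prop]
theorem measurable_signedCpow (c : ℂ) (k : ℕ) : Measurable (signedCpow c k) := by
  unfold signedCpow
  fun_prop

theorem signedCpow_mul (c : ℂ) (k : ℕ) (x y : ℝ) :
    signedCpow c k (x * y) = signedCpow c k x * signedCpow c k y := by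
  simp only [signedCpow, abs_mul, sign_mul, Complex.ofReal_mul,
    Complex.mul_cpow_ofReal_nonneg (abs_nonneg x) (abs_nonneg y), mul_pow]
  ring

theorem signedCpow_add {x : ℝ} (hx : x ≠ 0) (c d : ℂ) (k l : ℕ) :
    signedCpow (c + d) (k + l) x = signedCpow c k x * signedCpow d l x := by
  have : ((|x| : ℝ) : ℂ) ≠ 0 := by exact_mod_cast abs_ne_zero.mpr hx
  simp only [signedCpow, Complex.cpow_add _ _ this, pow_add]
  ring

theorem signedCpow_sum {x : ℝ} (hx : x ≠ 0) {ι : Type*} (s : Finset ι) (c : ι → ℂ)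
    (k : ι → ℕ) :
    signedCpow (∑ i ∈ s, c i) (∑ i ∈ s, k i) x = ∏ i ∈ s, signedCpow (c i) (k i) x := by
  classical
  induction s using Finset.induction with
  | empty => simp [signedCpow]
  | insert i s hi ih => rw [sum_insert hi, sum_insert hi, prod_insert hi, signedCpow_add hx, ih]

/-- The Riesz kernel of order `a` on `ℝ`; normalized so that orders add under convolution. -/
noncomputable def rieszKernel (a x : ℝ) : ℝ≥0∞ := ENNReal.ofReal (|x| ^ (a - 1))

@[fun_prop]
theorem measurable_rieszKernel (a : ℝ) : Measurable (rieszKernel a) := by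
  unfold rieszKernel
  fun_prop

theorem enorm_signedCpow_sub_one_le (β : ℂ) (k : ℕ) (x : ℝ) :
    ‖signedCpow (β - 1) k x‖ₑ ≤ rieszKernel β.re x := by
  rw [signedCpow, rieszKernel, ← ofReal_norm]
  refine ENNReal.ofReal_le_ofReal ?_
  have hsign : ‖(Real.sign x : ℂ) ^ k‖ ≤ 1 := by
    rw [norm_pow, Complex.norm_real, Real.norm_eq_abs]
    exact pow_le_one₀ (abs_nonneg _) (abs_sign_le_one x)
  have hpow : ‖((|x| : ℝ) : ℂ) ^ (β - 1)‖ ≤ |x| ^ (β.re - 1) := by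
    simpa [Complex.arg_ofReal_of_nonneg (abs_nonneg x)] using
      Complex.norm_cpow_le ((|x| : ℝ) : ℂ) (β - 1)
  calc _ = ‖((|x| : ℝ) : ℂ) ^ (β - 1)‖ * ‖(Real.sign x : ℂ) ^ k‖ := norm_mul _ _
    _ ≤ |x| ^ (β.re - 1) * 1 := by gcongr
    _ = _ := mul_one _

theorem integrableOn_abs_rpow_Icc_neg_one_one {r : ℝ} (hr : -1 < r) :
    IntegrableOn (fun x : ℝ => |x| ^ r) (Icc (-1) 1) := by
  have hpos : IntegrableOn (fun x : ℝ => |x| ^ r) (Icc 0 1) :=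
    ((intervalIntegrable_iff_integrableOn_Icc_of_le zero_le_one).mp
      (intervalIntegral.intervalIntegrable_rpow' hr)).congr_fun
      (fun x hx => by rw [abs_of_nonneg hx.1]) measurableSet_Icc
  have hneg : IntegrableOn (fun x : ℝ => |x| ^ r) (Icc (-1) 0) := by
    simpa using hpos.comp_neg
  rw [← Icc_union_Icc_eq_Icc (by norm_num) zero_le_one]
  exact hneg.union hpos

theorem integrableOn_abs_rpow_Iio_neg_one {s : ℝ} (hs : s < -1) :
    IntegrableOn (fun x : ℝ => |x| ^ s) (Iio (-1)) := by
  have : IntegrableOn (fun x : ℝ => |x| ^ s) (Ioi 1) :=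
    (integrableOn_Ioi_rpow_of_lt hs one_pos).congr_fun
      (fun x hx => by rw [abs_of_pos (one_pos.trans hx)]) measurableSet_Ioi
  simpa using this.comp_neg

theorem integrableOn_Iic_half_abs_one_sub_rpow_mul_abs_rpow {a b : ℝ} (hb : 0 < b)
    (hab : a + b < 1) :
    IntegrableOn (fun x : ℝ => |1 - x| ^ (a - 1) * |x| ^ (b - 1)) (Iic (1 / 2)) := by
  have hmeas : AEStronglyMeasurable (fun x : ℝ => |1 - x| ^ (a - 1) * |x| ^ (b - 1)) := by
    fun_prop
  have hnear :
      IntegrableOn (fun x : ℝ => |1 - x| ^ (a - 1) * |x| ^ (b - 1)) (Icc (-1) (1 / 2)) := by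
    have hdom := (integrableOn_abs_rpow_Icc_neg_one_one (r := b - 1) (by linarith)).mono_set
      (Icc_subset_Icc_right (show (1 / 2 : ℝ) ≤ 1 by norm_num))
    refine Integrable.mono' (hdom.const_mul ((1 / 2) ^ (a - 1))) hmeas.restrict
      (ae_restrict_of_forall_mem measurableSet_Icc fun x hx => ?_)
    have h : 1 / 2 ≤ |1 - x| := by
      rw [abs_of_pos (show (0 : ℝ) < 1 - x by linarith [hx.2])]; linarith [hx.2]
    rw [Real.norm_of_nonneg (by positivity)]
    exact mul_le_mul_of_nonneg_right
      (Real.rpow_le_rpow_of_nonpos (by norm_num) h (by linarith)) (by positivity)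
  have hfar : IntegrableOn (fun x : ℝ => |1 - x| ^ (a - 1) * |x| ^ (b - 1)) (Iio (-1)) := by
    refine Integrable.mono' (integrableOn_abs_rpow_Iio_neg_one (s := a + b - 2) (by linarith))
      hmeas.restrict (ae_restrict_of_forall_mem measurableSet_Iio fun x (hx : x < -1) => ?_)
    have hx0 : 0 < |x| := abs_pos.mpr (by linarith)
    have h : |x| ≤ |1 - x| := by
      rw [abs_of_neg (show x < 0 by linarith), abs_of_pos (show (0 : ℝ) < 1 - x by linarith)]
      linarith
    rw [Real.norm_of_nonneg (by positivity), show a + b - 2 = (a - 1) + (b - 1) by ring,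
      Real.rpow_add hx0]
    exact mul_le_mul_of_nonneg_right
      (Real.rpow_le_rpow_of_nonpos hx0 h (by linarith)) (by positivity)
  refine (hfar.union hnear).mono_set fun x (hx : x ≤ 1 / 2) => ?_
  rcases lt_or_ge x (-1) with h | h
  · exact Or.inl h
  · exact Or.inr ⟨h, hx⟩

theorem integrable_abs_one_sub_rpow_mul_abs_rpow {a b : ℝ} (ha : 0 < a) (hb : 0 < b)
    (hab : a + b < 1) : Integrable (fun x : ℝ => |1 - x| ^ (a - 1) * |x| ^ (b - 1)) := by
  have hleft := integrableOn_Iic_half_abs_one_sub_rpow_mul_abs_rpow hb hab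
  have hright : IntegrableOn (fun x : ℝ => |1 - x| ^ (a - 1) * |x| ^ (b - 1)) (Ici (1 / 2)) := by
    rw [← (Measure.measurePreserving_sub_left volume 1).integrableOn_comp_preimage
      (measurableEmbedding_subLeft 1)]
    convert integrableOn_Iic_half_abs_one_sub_rpow_mul_abs_rpow ha (add_comm a b ▸ hab) using 1
    · ext x
      simp [mul_comm]
    · ext x
      simp only [Set.mem_preimage, Set.mem_Ici, Set.mem_Iic]
      constructor <;> intro h <;> linarith
  rw [← integrableOn_univ, ← Iic_union_Ici (a := 1 / 2)]
  exact hleft.union hright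

theorem lintegral_rieszKernel_one_sub_mul_lt_top {a b : ℝ} (ha : 0 < a) (hb : 0 < b)
    (hab : a + b < 1) : ∫⁻ x, rieszKernel a (1 - x) * rieszKernel b x < ∞ := by
  simpa only [rieszKernel, ← ENNReal.ofReal_mul (Real.rpow_nonneg (abs_nonneg _) _)] using
    (integrable_abs_one_sub_rpow_mul_abs_rpow ha hb hab).lintegral_lt_top

theorem rieszKernel_mul (a x y : ℝ) :
    rieszKernel a (x * y) = ENNReal.ofReal (|x| ^ (a - 1)) * rieszKernel a y := by
  rw [rieszKernel, rieszKernel, abs_mul, Real.mul_rpow (abs_nonneg x) (abs_nonneg y),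
    ENNReal.ofReal_mul (Real.rpow_nonneg (abs_nonneg x) _)]

theorem lintegral_rieszKernel_sub_mul (a b : ℝ) {u : ℝ} (hu : u ≠ 0) :
    ∫⁻ s, rieszKernel a (u - s) * rieszKernel b s
      = (∫⁻ s, rieszKernel a (1 - s) * rieszKernel b s) * rieszKernel (a + b) u := by
  have hpow : |u| * (|u| ^ (a - 1) * |u| ^ (b - 1)) = |u| ^ (a + b - 1) := by
    rw [show a + b - 1 = 1 + ((a - 1) + (b - 1)) by ring, Real.rpow_add (abs_pos.mpr hu),
      Real.rpow_add (abs_pos.mpr hu), Real.rpow_one]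
  have hscale : ∀ y, rieszKernel a (u - u * y) * rieszKernel b (u * y)
      = ENNReal.ofReal (|u| ^ (a - 1) * |u| ^ (b - 1)) *
          (rieszKernel a (1 - y) * rieszKernel b y) := fun y => by
    rw [← mul_one_sub, rieszKernel_mul, rieszKernel_mul,
      ENNReal.ofReal_mul (Real.rpow_nonneg (abs_nonneg u) _)]
    ring
  rw [lintegral_eq_ofReal_abs_mul_lintegral_comp_mul_left _ hu]
  simp_rw [hscale]
  rw [lintegral_const_mul' _ _ ofReal_ne_top, ← mul_assoc,
    ← ENNReal.ofReal_mul (abs_nonneg u), hpow, rieszKernel, mul_comm]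

theorem exists_lintegral_rieszKernel_sub_sum_mul_prod {a₀ : ℝ} (ha₀ : 0 < a₀) {m : ℕ}
    (a : Fin m → ℝ) (ha : ∀ j, 0 < a j) (hsum : a₀ + ∑ j, a j < 1) :
    ∃ C < ∞, ∀ t ≠ 0, ∫⁻ x : Fin m → ℝ, rieszKernel a₀ (t - ∑ j, x j) * ∏ j, rieszKernel (a j) (x j)
      = C * rieszKernel (a₀ + ∑ j, a j) t := by
  induction m with
  | zero => exact ⟨1, one_lt_top, fun t _ => by simp [volume_pi]⟩
  | succ m ih =>
    set a' := a₀ + ∑ j : Fin m, a j.succ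
    have ha' : 0 < a' := add_pos_of_pos_of_nonneg ha₀ (sum_nonneg fun j _ => (ha _).le)
    have hsum' : a₀ + ∑ j, a j = a' + a 0 := by rw [Fin.sum_univ_succ]; ring
    obtain ⟨C, hC, hC_eq⟩ := ih (fun j => a j.succ) (fun j => ha _) (by linarith [ha 0])
    refine ⟨C * ∫⁻ s, rieszKernel a' (1 - s) * rieszKernel (a 0) s,
      mul_lt_top hC (lintegral_rieszKernel_one_sub_mul_lt_top ha' (ha 0) (by linarith)),
      fun t ht => ?_⟩
    calc _ = ∫⁻ s, (∫⁻ y : Fin m → ℝ, rieszKernel a₀ (t - s - ∑ j, y j) *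
              ∏ j, rieszKernel (a j.succ) (y j)) * rieszKernel (a 0) s := by
          rw [lintegral_fin_succ (by fun_prop)]
          refine lintegral_congr fun s => ?_
          rw [← lintegral_mul_const _ (by fun_prop)]
          simp only [Fin.sum_univ_succ, Fin.prod_univ_succ, Fin.cons_zero, Fin.cons_succ,
            sub_add_eq_sub_sub]
          exact lintegral_congr fun y => by ring
      _ = ∫⁻ s, C * (rieszKernel a' (t - s) * rieszKernel (a 0) s) := by
          refine lintegral_congr_ae ?_
          filter_upwards [Measure.ae_ne volume t] with s hs
          rw [hC_eq _ (sub_ne_zero.mpr hs.symm), mul_assoc]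
      _ = _ := by
          rw [lintegral_const_mul' _ _ hC.ne, lintegral_rieszKernel_sub_mul _ _ ht, hsum',
            mul_assoc]

noncomputable def betaLikeIntegrand (m : ℕ) (β₀ : ℂ) (η₀ : ℕ) (β : Fin m → ℂ) (η : Fin m → ℕ)
    (t : ℝ) (x : Fin m → ℝ) : ℂ :=
  signedCpow (β₀ - 1) η₀ (t - ∑ j, x j) * ∏ j, signedCpow (β j - 1) (η j) (x j)

theorem betaLikeIntegral_eq_integral (m : ℕ) (β₀ : ℂ) (η₀ : ℕ) (β : Fin m → ℂ) (η : Fin m → ℕ)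
    (t : ℝ) : betaLikeIntegral m β₀ η₀ β η t = ∫ x, betaLikeIntegrand m β₀ η₀ β η t x :=
  rfl

section Integrand

variable {m : ℕ} {β₀ : ℂ} {η₀ : ℕ} {β : Fin m → ℂ} {η : Fin m → ℕ}

theorem integrable_betaLikeIntegrand (h₀ : 0 < β₀.re) (hβ : ∀ j, 0 < (β j).re)
    (hsum : (β₀ + ∑ j, β j).re < 1) {t : ℝ} (ht : t ≠ 0) :
    Integrable (betaLikeIntegrand m β₀ η₀ β η t) := by
  obtain ⟨C, hC, hC_eq⟩ := exists_lintegral_rieszKernel_sub_sum_mul_prod h₀ (fun j => (β j).re) hβ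
    (by simpa only [Complex.add_re, Complex.re_sum] using hsum)
  refine ⟨(by unfold betaLikeIntegrand; fun_prop : Measurable _).aestronglyMeasurable,
    hasFiniteIntegral_iff_enorm.mpr ?_⟩
  calc ∫⁻ x, ‖betaLikeIntegrand m β₀ η₀ β η t x‖ₑ
      ≤ ∫⁻ x : Fin m → ℝ, rieszKernel β₀.re (t - ∑ j, x j) * ∏ j, rieszKernel (β j).re (x j) := by
        refine lintegral_mono fun x => ?_
        rw [betaLikeIntegrand, enorm_mul, enorm_prod]
        gcongr with j
        · exact enorm_signedCpow_sub_one_le _ _ _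
        · exact enorm_signedCpow_sub_one_le _ _ _
    _ = C * rieszKernel (β₀.re + ∑ j, (β j).re) t := hC_eq t ht
    _ < ∞ := mul_lt_top hC ofReal_lt_top

theorem betaLikeIntegrand_smul {t : ℝ} (ht : t ≠ 0) (x : Fin m → ℝ) :
    betaLikeIntegrand m β₀ η₀ β η t (t • x)
      = signedCpow (β₀ - 1 + ∑ j, (β j - 1)) (η₀ + ∑ j, η j) t *
          betaLikeIntegrand m β₀ η₀ β η 1 x := by
  have hsub : t - ∑ j, (t • x) j = t * (1 - ∑ j, x j) := by
    simp only [Pi.smul_apply, smul_eq_mul, ← mul_sum, mul_one_sub]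
  rw [betaLikeIntegrand, betaLikeIntegrand, hsub]
  simp only [signedCpow_mul, Pi.smul_apply, smul_eq_mul, prod_mul_distrib, signedCpow_add ht,
    signedCpow_sum ht]
  ring

end Integrand

end BetaLike

open BetaLike Finset in
theorem beta_like_integral_homogeneity_general (m : ℕ)
    (β₀ : ℂ) (η₀ : ℕ) (β : Fin m → ℂ) (η : Fin m → ℕ)
    (h₀ : 0 < β₀.re) (hβ : ∀ j, 0 < (β j).re)
    (hsum : (β₀ + ∑ j, β j).re < 1) (t : ℝ) (ht : t ≠ 0) :
    Integrable (fun x : Fin m → ℝ =>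
      ((|t - ∑ j, x j| : ℝ) : ℂ) ^ (β₀ - 1) * ((Real.sign (t - ∑ j, x j) : ℂ)) ^ η₀ *
        ∏ j, (((|x j| : ℝ) : ℂ) ^ (β j - 1) * ((Real.sign (x j) : ℂ)) ^ η j)) ∧
      betaLikeIntegral m β₀ η₀ β η t
        = ((|t| : ℝ) : ℂ) ^ (β₀ + ∑ j, β j - 1) * ((Real.sign t : ℂ)) ^ (η₀ + ∑ j, η j) *
            betaLikeIntegral m β₀ η₀ β η 1 := by
  refine ⟨integrable_betaLikeIntegrand h₀ hβ hsum ht, ?_⟩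
  have hexp : (m : ℂ) + (β₀ - 1 + ∑ j, (β j - 1)) = β₀ + ∑ j, β j - 1 := by
    simp only [sum_sub_distrib, sum_const, card_univ, Fintype.card_fin, nsmul_eq_mul, mul_one]
    ring
  calc betaLikeIntegral m β₀ η₀ β η t
      = |t| ^ m • ∫ x, betaLikeIntegrand m β₀ η₀ β η t (t • x) := by
        simpa only [betaLikeIntegral_eq_integral, Module.finrank_fin_fun] using
          integral_eq_abs_pow_finrank_smul_integral_comp_smul volume
            (betaLikeIntegrand m β₀ η₀ β η t) ht
    _ = signedCpow m 0 t * (signedCpow (β₀ - 1 + ∑ j, (β j - 1)) (η₀ + ∑ j, η j) t *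
          betaLikeIntegral m β₀ η₀ β η 1) := by
        simp_rw [betaLikeIntegrand_smul ht, integral_const_mul, Complex.real_smul,
          betaLikeIntegral_eq_integral]
        simp [signedCpow]
    _ = signedCpow (β₀ + ∑ j, β j - 1) (η₀ + ∑ j, η j) t * betaLikeIntegral m β₀ η₀ β η 1 := by
        rw [← mul_assoc, ← signedCpow_add ht, hexp, zero_add]

/-- Homogeneity of the beta-like integral: under the stated convergence hypotheses, the
integral converges absolutely and `I(t) = |t|^{β₀+⋯+β_{n-1}−1} sgn(t)^{η₀+⋯+η_{n-1}} I(1)`. -/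
theorem beta_like_integral_homogeneity (m : ℕ) (hm : 1 ≤ m)
    (β₀ : ℂ) (η₀ : ℕ) (β : Fin m → ℂ) (η : Fin m → ℕ)
    (hη₀ : η₀ ≤ 1) (hη : ∀ j, η j ≤ 1)
    (h₀ : 0 < β₀.re) (hβ : ∀ j, 0 < (β j).re)
    (hsum : (β₀ + ∑ j, β j).re < 1) (t : ℝ) (ht : t ≠ 0) :
    Integrable (fun x : Fin m → ℝ =>
      ((|t - ∑ j, x j| : ℝ) : ℂ) ^ (β₀ - 1) * ((Real.sign (t - ∑ j, x j) : ℂ)) ^ η₀ *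
        ∏ j, (((|x j| : ℝ) : ℂ) ^ (β j - 1) * ((Real.sign (x j) : ℂ)) ^ η j)) ∧
      betaLikeIntegral m β₀ η₀ β η t
        = ((|t| : ℝ) : ℂ) ^ (β₀ + ∑ j, β j - 1) * ((Real.sign t : ℂ)) ^ (η₀ + ∑ j, η j) *
            betaLikeIntegral m β₀ η₀ β η 1 :=
  beta_like_integral_homogeneity_general m β₀ η₀ β η h₀ hβ hsum t ht
end
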